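/- arXiv:2206.01868 — 2 statements merged into one kernel-verified Lean document; each statement's English description precedes it below -/
import Mathlib

section
/- Let f : [0,∞) → ℝ be a C¹, increasing function with f(t) > 0 for all t > 0, and let F(t) = ∫₀^t f(k) dk. Then for all s ≥ 0: ∫₀^{2s} F(t) dt ≥ (∫₀^s √(f(t)) dt)². -/
/-!
By Cauchy–Schwarz, `(∫₀^s √f)² ≤ s ∫₀^s f = s F(s)`. Since `f ≥ 0`, `F` is nonnegative and
increasing, so `s F(s) ≤ ∫ₛ^{2s} F ≤ ∫₀^{2s} F`.
-/

open Set MeasureTheory intervalIntegral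

/-- Cauchy–Schwarz against the constant `1`: the quadratic `t ↦ ∫ₐᵇ (g - t)²` is nonnegative,
so its discriminant is nonpositive. -/
theorem sq_intervalIntegral_le_mul_intervalIntegral_sq {g : ℝ → ℝ} {a b : ℝ} (hab : a ≤ b)
    (hg : IntervalIntegrable g volume a b)
    (hg2 : IntervalIntegrable (fun x => g x ^ 2) volume a b) :
    (∫ x in a..b, g x) ^ 2 ≤ (b - a) * ∫ x in a..b, g x ^ 2 := by
  have hquad : ∀ t : ℝ,
      0 ≤ (b - a) * (t * t) + (-2 * ∫ x in a..b, g x) * t + ∫ x in a..b, g x ^ 2 := by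
    intro t
    have hexpand : ∫ x in a..b, (g x - t) ^ 2 =
        (b - a) * (t * t) + (-2 * ∫ x in a..b, g x) * t + ∫ x in a..b, g x ^ 2 := by
      have hsq : ∀ x, (g x - t) ^ 2 = g x ^ 2 - (2 * t) * g x + t * t := fun x => by ring
      simp only [hsq]
      rw [integral_add (hg2.sub (hg.const_mul _)) intervalIntegrable_const,
        integral_sub hg2 (hg.const_mul _), intervalIntegral.integral_const_mul,
        intervalIntegral.integral_const, smul_eq_mul]
      ring
    exact hexpand ▸ integral_nonneg hab fun x _ => sq_nonneg _
  have hdiscr := discrim_le_zero hquad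
  rw [discrim] at hdiscr
  nlinarith

theorem MonotoneOn.mul_le_intervalIntegral {F : ℝ → ℝ} {a b c : ℝ} (hF : MonotoneOn F (Icc a c))
    (hFa : 0 ≤ F a) (hab : a ≤ b) (hbc : b ≤ c) :
    (c - b) * F b ≤ ∫ x in a..c, F x := by
  have hac := hab.trans hbc
  have hFi : IntervalIntegrable F volume a c :=
    (hF.mono (uIcc_of_le hac).subset).intervalIntegrable
  calc (c - b) * F b = ∫ _ in b..c, F b := by simp
    _ ≤ ∫ x in b..c, F x :=
        integral_mono_on hbc intervalIntegrable_const
          (hFi.mono_set (uIcc_subset_uIcc_right (by rw [uIcc_of_le hac]; exact ⟨hab, hbc⟩)))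
          fun x hx => hF ⟨hab, hbc⟩ ⟨hab.trans hx.1, hx.2⟩ hx.1
    _ ≤ ∫ x in a..c, F x :=
        integral_mono_interval hab hbc le_rfl ((ae_restrict_iff' measurableSet_Ioc).2 <|
          .of_forall fun x hx => hFa.trans (hF ⟨le_rfl, hac⟩ (Ioc_subset_Icc_self hx) hx.1.le)) hFi

theorem stmt_2_general (f : ℝ → ℝ)
    (hmono : MonotoneOn f (Set.Ici 0)) (hfpos : ∀ t > (0:ℝ), 0 < f t)
    (F : ℝ → ℝ) (hF : ∀ t, F t = ∫ k in (0:ℝ)..t, f k) :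
    ∀ s ≥ (0:ℝ),
      (∫ t in (0:ℝ)..s, Real.sqrt (f t)) ^ 2 ≤ ∫ t in (0:ℝ)..(2 * s), F t := by
  intro s hs
  have hfi : ∀ t ≥ 0, IntervalIntegrable f volume 0 t := fun t ht =>
    (hmono.mono fun x hx => (uIcc_of_le ht ▸ hx).1).intervalIntegrable
  have hFmono : MonotoneOn F (Ici 0) := fun x hx y hy hxy => by
    rw [hF, hF]
    exact integral_mono_interval le_rfl hx hxy ((ae_restrict_iff' measurableSet_Ioc).2 <|
      .of_forall fun t ht => (hfpos t ht.1).le) (hfi y hy)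
  have hsqrt_mono : MonotoneOn (fun t => √(f t)) (Ici 0) :=
    Real.sqrt_monotone.comp_monotoneOn hmono
  have hsq : EqOn (fun t => √(f t) ^ 2) f (uIoo 0 s) := fun t ht =>
    Real.sq_sqrt (hfpos t (uIoo_of_le hs ▸ ht).1).le
  calc (∫ t in (0:ℝ)..s, √(f t)) ^ 2 ≤ (s - 0) * ∫ t in (0:ℝ)..s, √(f t) ^ 2 :=
        sq_intervalIntegral_le_mul_intervalIntegral_sq hs
          (hsqrt_mono.mono fun x hx => (uIcc_of_le hs ▸ hx).1).intervalIntegrable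
          ((hfi s hs).congr_uIoo hsq.symm)
    _ = (2 * s - s) * F s := by rw [integral_congr_uIoo hsq, hF]; ring
    _ ≤ ∫ t in (0:ℝ)..(2 * s), F t :=
        (hFmono.mono Icc_subset_Ici_self).mul_le_intervalIntegral (by rw [hF, integral_same]) hs
          (by linarith)

theorem stmt_2 (f : ℝ → ℝ) (hf : ContDiffOn ℝ 1 f (Set.Ici 0))
    (hmono : MonotoneOn f (Set.Ici 0)) (hfpos : ∀ t > (0:ℝ), 0 < f t)
    (F : ℝ → ℝ) (hF : ∀ t, F t = ∫ k in (0:ℝ)..t, f k) :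
    ∀ s ≥ (0:ℝ),
      (∫ t in (0:ℝ)..s, Real.sqrt (f t)) ^ 2 ≤ ∫ t in (0:ℝ)..(2 * s), F t :=
  stmt_2_general f hmono hfpos F hF
end

section
/- Let f : [0,∞) → ℝ be C¹, increasing, with f(t) > 0 for t > 0, let F(t) = ∫₀^t f(k) dk, and let p > 0, q > 0 with 2p - q + 1 > 0. Then ∫₁^∞ ds / (∫₀^s √(f(t)) dt)^{2p/(2p-q+1)} < ∞ if and only if ∫₁^∞ ds / (∫₀^s F(t) dt)^{p/(2p-q+1)} < ∞. -/
/-!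
Both integrands are decreasing, so each integral only sees the size of its denominator up to a
dilation of the variable. For a function `g ≥ 0` increasing on `[0, ∞)` one has
`s g(s) ≤ ∫₀^{2s} g` and `∫₀^s g ≤ s g(s)`; applied to `f`, `√f` and `F` this gives
`∫₀^s F ≤ (∫₀^{2s} √f)²` and `(∫₀^s √f)² ≤ ∫₀^{4s} F`, and the substitution `σ = c s` transfers
integrability on `[1, ∞)` in both directions.
-/

open Set MeasureTheory intervalIntegral

section MonotonePrimitive

variable {g : ℝ → ℝ} {a b s : ℝ}

lemma intervalIntegrable_of_monotoneOn_Ici (hg : MonotoneOn g (Ici 0)) (ha : 0 ≤ a)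
    (hb : 0 ≤ b) : IntervalIntegrable g volume a b :=
  (hg.mono fun _ hx => (le_min ha hb).trans hx.1).intervalIntegrable

lemma integral_nonneg_of_monotoneOn_Ici (hg : MonotoneOn g (Ici 0)) (hg0 : ∀ t > 0, 0 ≤ g t)
    (ha : 0 ≤ a) (hab : a ≤ b) : 0 ≤ ∫ t in a..b, g t := by
  simpa using integral_mono_on_of_le_Ioo hab intervalIntegrable_const
    (intervalIntegrable_of_monotoneOn_Ici hg ha (ha.trans hab))
    fun x hx => hg0 x (ha.trans_lt hx.1)

lemma integral_le_mul_of_monotoneOn_Ici (hg : MonotoneOn g (Ici 0)) (hs : 0 ≤ s) :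
    ∫ t in (0:ℝ)..s, g t ≤ s * g s := by
  simpa using integral_mono_on hs (intervalIntegrable_of_monotoneOn_Ici hg le_rfl hs)
    intervalIntegrable_const fun x hx => hg hx.1 hs hx.2

lemma mul_le_integral_two_mul_of_monotoneOn_Ici (hg : MonotoneOn g (Ici 0))
    (hg0 : ∀ t > 0, 0 ≤ g t) (hs : 0 ≤ s) : s * g s ≤ ∫ t in (0:ℝ)..2 * s, g t := by
  have hss : s ≤ 2 * s := by linarith
  rw [← integral_add_adjacent_intervals (intervalIntegrable_of_monotoneOn_Ici hg le_rfl hs)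
    (intervalIntegrable_of_monotoneOn_Ici hg hs (hs.trans hss))]
  have hupper : s * g s ≤ ∫ t in s..2 * s, g t := by
    have := integral_mono_on hss intervalIntegrable_const
      (intervalIntegrable_of_monotoneOn_Ici hg hs (hs.trans hss))
      fun x hx => hg hs (hs.trans hx.1) hx.1
    rwa [intervalIntegral.integral_const, smul_eq_mul, show 2 * s - s = s by ring] at this
  linarith [integral_nonneg_of_monotoneOn_Ici hg hg0 le_rfl hs]

lemma monotoneOn_primitive (hg : MonotoneOn g (Ici 0)) (hg0 : ∀ t > 0, 0 ≤ g t) :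
    MonotoneOn (fun s => ∫ t in (0:ℝ)..s, g t) (Ici 0) := by
  intro a ha b hb hab
  dsimp only
  rw [← integral_add_adjacent_intervals (intervalIntegrable_of_monotoneOn_Ici hg le_rfl ha)
    (intervalIntegrable_of_monotoneOn_Ici hg ha hb)]
  exact le_add_of_nonneg_right (integral_nonneg_of_monotoneOn_Ici hg hg0 ha hab)

lemma primitive_pos (hg : MonotoneOn g (Ici 0)) (hgpos : ∀ t > 0, 0 < g t) (hs : 0 < s) :
    0 < ∫ t in (0:ℝ)..s, g t := by
  have h := mul_le_integral_two_mul_of_monotoneOn_Ici hg (fun t ht => (hgpos t ht).le)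
    (half_pos hs).le
  rw [mul_div_cancel₀ s two_ne_zero] at h
  exact (mul_pos (half_pos hs) (hgpos _ (half_pos hs))).trans_le h

end MonotonePrimitive

section KellerOsserman

variable {f : ℝ → ℝ} {s : ℝ}

lemma monotoneOn_sqrt_comp (hf : MonotoneOn f (Ici 0)) :
    MonotoneOn (fun t => √(f t)) (Ici 0) :=
  fun _ ha _ hb hab => Real.sqrt_le_sqrt (hf ha hb hab)

lemma integral_primitive_le_sq_integral_sqrt (hf : MonotoneOn f (Ici 0))
    (hf0 : ∀ t > 0, 0 ≤ f t) (hs : 0 < s) :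
    ∫ t in (0:ℝ)..s, ∫ k in (0:ℝ)..t, f k ≤ (∫ t in (0:ℝ)..2 * s, √(f t)) ^ 2 :=
  calc ∫ t in (0:ℝ)..s, ∫ k in (0:ℝ)..t, f k
      ≤ s * ∫ k in (0:ℝ)..s, f k :=
        integral_le_mul_of_monotoneOn_Ici (monotoneOn_primitive hf hf0) hs.le
    _ ≤ s * (s * f s) := mul_le_mul_of_nonneg_left (integral_le_mul_of_monotoneOn_Ici hf hs.le) hs.le
    _ = (s * √(f s)) ^ 2 := by rw [mul_pow, Real.sq_sqrt (hf0 s hs)]; ring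
    _ ≤ (∫ t in (0:ℝ)..2 * s, √(f t)) ^ 2 := by
        gcongr
        exact mul_le_integral_two_mul_of_monotoneOn_Ici (monotoneOn_sqrt_comp hf)
          (fun t _ => Real.sqrt_nonneg _) hs.le

lemma sq_integral_sqrt_le_integral_primitive (hf : MonotoneOn f (Ici 0))
    (hf0 : ∀ t > 0, 0 ≤ f t) (hs : 0 < s) :
    (∫ t in (0:ℝ)..s, √(f t)) ^ 2 ≤ ∫ t in (0:ℝ)..4 * s, ∫ k in (0:ℝ)..t, f k := by
  have hF0 : 0 ≤ ∫ k in (0:ℝ)..2 * s, f k :=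
    integral_nonneg_of_monotoneOn_Ici hf hf0 le_rfl (by linarith)
  calc (∫ t in (0:ℝ)..s, √(f t)) ^ 2
      ≤ (s * √(f s)) ^ 2 := by
        gcongr
        · exact integral_nonneg_of_monotoneOn_Ici (monotoneOn_sqrt_comp hf)
            (fun t _ => Real.sqrt_nonneg _) le_rfl hs.le
        · exact integral_le_mul_of_monotoneOn_Ici (monotoneOn_sqrt_comp hf) hs.le
    _ = s * (s * f s) := by rw [mul_pow, Real.sq_sqrt (hf0 s hs)]; ring
    _ ≤ s * ∫ k in (0:ℝ)..2 * s, f k := by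
        gcongr
        exact mul_le_integral_two_mul_of_monotoneOn_Ici hf hf0 hs.le
    _ ≤ 2 * s * ∫ k in (0:ℝ)..2 * s, f k := by nlinarith
    _ ≤ ∫ t in (0:ℝ)..2 * (2 * s), ∫ k in (0:ℝ)..t, f k :=
        mul_le_integral_two_mul_of_monotoneOn_Ici (monotoneOn_primitive hf hf0)
          (fun t ht => integral_nonneg_of_monotoneOn_Ici hf hf0 le_rfl ht.le) (by linarith)
    _ = ∫ t in (0:ℝ)..4 * s, ∫ k in (0:ℝ)..t, f k := by ring_nf

end KellerOsserman

lemma AntitoneOn.integrableOn_Ici_of_comp_mul_le {L R : ℝ → ℝ} {c : ℝ} (hc : 1 ≤ c)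
    (hL : AntitoneOn L (Ici 1)) (hL0 : ∀ s ∈ Ici 1, 0 ≤ L s)
    (hLR : ∀ s ∈ Ici 1, L (c * s) ≤ R s) (hR : IntegrableOn R (Ici 1)) :
    IntegrableOn L (Ici 1) := by
  have hc0 : 0 < c := one_pos.trans_le hc
  have hmaps : MapsTo (c * ·) (Ici (1:ℝ)) (Ici 1) :=
    fun s hs => one_le_mul_of_one_le_of_one_le hc hs
  have hLc : IntegrableOn (fun s => L (c * s)) (Ici 1) := by
    have hanti : AntitoneOn (fun s => L (c * s)) (Ici 1) :=
      fun a ha b hb hab => hL (hmaps ha) (hmaps hb) (mul_le_mul_of_nonneg_left hab hc0.le)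
    refine hR.mono' (aemeasurable_restrict_of_antitoneOn measurableSet_Ici hanti).aestronglyMeasurable
      (ae_restrict_of_forall_mem measurableSet_Ici fun s hs => ?_)
    rw [Real.norm_of_nonneg (hL0 _ (hmaps hs))]
    exact hLR s hs
  have hIoi : IntegrableOn L (Ioi c) := by
    simpa using (integrableOn_Ioi_comp_mul_left_iff L 1 hc0).1 (hLc.mono_set Ioi_subset_Ici_self)
  have hIcc : IntegrableOn L (Icc 1 c) :=
    (hL.mono Icc_subset_Ici_self).integrableOn_isCompact isCompact_Icc
  rw [← Icc_union_Ioi_eq_Ici hc]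
  exact hIcc.union hIoi

lemma integrableOn_inv_rpow_of_le_comp_mul {A B : ℝ → ℝ} {β c : ℝ} (hβ : 0 ≤ β) (hc : 1 ≤ c)
    (hA : MonotoneOn A (Ici 1)) (hApos : ∀ s ∈ Ici 1, 0 < A s) (hBpos : ∀ s ∈ Ici 1, 0 < B s)
    (hBA : ∀ s ∈ Ici 1, B s ≤ A (c * s)) (hB : IntegrableOn (fun s => (B s ^ β)⁻¹) (Ici 1)) :
    IntegrableOn (fun s => (A s ^ β)⁻¹) (Ici 1) := by
  have inv_rpow_anti : ∀ {x y : ℝ}, 0 < x → x ≤ y → (y ^ β)⁻¹ ≤ (x ^ β)⁻¹ :=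
    fun hx hxy => inv_anti₀ (Real.rpow_pos_of_pos hx β) (Real.rpow_le_rpow hx.le hxy hβ)
  exact AntitoneOn.integrableOn_Ici_of_comp_mul_le hc
    (fun a ha b hb hab => inv_rpow_anti (hApos a ha) (hA ha hb hab))
    (fun s hs => inv_nonneg.2 (Real.rpow_nonneg (hApos s hs).le β))
    (fun s hs => inv_rpow_anti (hBpos s hs) (hBA s hs)) hB

theorem stmt_3_general (f : ℝ → ℝ)
    (hmono : MonotoneOn f (Set.Ici 0)) (hfpos : ∀ t > (0:ℝ), 0 < f t)
    (F : ℝ → ℝ) (hF : ∀ t, F t = ∫ k in (0:ℝ)..t, f k)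
    (p q : ℝ) (hp : 0 < p) (hpq : 0 < 2 * p - q + 1) :
    MeasureTheory.IntegrableOn
        (fun σ => ((∫ t in (0:ℝ)..σ, Real.sqrt (f t)) ^ (2 * p / (2 * p - q + 1)))⁻¹)
        (Set.Ici 1)
      ↔
    MeasureTheory.IntegrableOn
        (fun σ => ((∫ t in (0:ℝ)..σ, F t) ^ (p / (2 * p - q + 1)))⁻¹)
        (Set.Ici 1) := by
  obtain rfl : F = fun t => ∫ k in (0:ℝ)..t, f k := funext hF
  have hf0 : ∀ t > 0, 0 ≤ f t := fun t ht => (hfpos t ht).le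
  have hβ : 0 ≤ p / (2 * p - q + 1) := (div_pos hp hpq).le
  have hGpos : ∀ s ∈ Ici (1:ℝ), 0 < ∫ t in (0:ℝ)..s, √(f t) := fun s hs =>
    primitive_pos (monotoneOn_sqrt_comp hmono) (fun t ht => Real.sqrt_pos.2 (hfpos t ht))
      (one_pos.trans_le hs)
  have hHpos : ∀ s ∈ Ici (1:ℝ), 0 < ∫ t in (0:ℝ)..s, ∫ k in (0:ℝ)..t, f k := fun s hs =>
    primitive_pos (monotoneOn_primitive hmono hf0) (fun t ht => primitive_pos hmono hfpos ht)
      (one_pos.trans_le hs)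
  have hIci : Ici (1:ℝ) ⊆ Ici 0 := Ici_subset_Ici.2 zero_le_one
  have hGmono := (monotoneOn_primitive (monotoneOn_sqrt_comp hmono) fun t _ =>
    Real.sqrt_nonneg _).mono hIci
  have hG2mono : MonotoneOn (fun s => (∫ t in (0:ℝ)..s, √(f t)) ^ 2) (Ici 1) :=
    fun a ha b hb hab => pow_le_pow_left₀ (hGpos a ha).le (hGmono ha hb hab) 2
  have hHmono := (monotoneOn_primitive (monotoneOn_primitive hmono hf0) fun t ht =>
    (primitive_pos hmono hfpos ht).le).mono hIci
  -- `x ^ (2β) = (x ^ 2) ^ β` puts both integrands in the form `(A s ^ β)⁻¹`.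
  rw [mul_div_assoc, integrableOn_congr_fun (fun s hs => by
    rw [Real.rpow_mul (hGpos s hs).le, Real.rpow_two]) measurableSet_Ici]
  constructor
  · exact integrableOn_inv_rpow_of_le_comp_mul hβ (by norm_num) hHmono hHpos
      (fun s hs => pow_pos (hGpos s hs) 2)
      (fun s hs => sq_integral_sqrt_le_integral_primitive hmono hf0 (one_pos.trans_le hs))
  · exact integrableOn_inv_rpow_of_le_comp_mul hβ (by norm_num) hG2mono
      (fun s hs => pow_pos (hGpos s hs) 2) hHpos
      (fun s hs => integral_primitive_le_sq_integral_sqrt hmono hf0 (one_pos.trans_le hs))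

theorem stmt_3 (f : ℝ → ℝ) (hf : ContDiffOn ℝ 1 f (Set.Ici 0))
    (hmono : MonotoneOn f (Set.Ici 0)) (hfpos : ∀ t > (0:ℝ), 0 < f t)
    (F : ℝ → ℝ) (hF : ∀ t, F t = ∫ k in (0:ℝ)..t, f k)
    (p q : ℝ) (hp : 0 < p) (hq : 0 < q) (hpq : 0 < 2 * p - q + 1) :
    MeasureTheory.IntegrableOn
        (fun σ => ((∫ t in (0:ℝ)..σ, Real.sqrt (f t)) ^ (2 * p / (2 * p - q + 1)))⁻¹)
        (Set.Ici 1)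
      ↔
    MeasureTheory.IntegrableOn
        (fun σ => ((∫ t in (0:ℝ)..σ, F t) ^ (p / (2 * p - q + 1)))⁻¹)
        (Set.Ici 1) :=
  stmt_3_general f hmono hfpos F hF p q hp hpq
end
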